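/- Let X be an ideal of L⁰(Ω, Σ, ℙ) containing the constants and Y a sublattice of X with 1 ∈ Y. Then Y is order closed in X if and only if Y = L⁰(σ(Y)) ∩ X, where σ(Y) is the smallest sub-σ-algebra of Σ making all members of Y measurable and containing all ℙ-null sets. -/

import Mathlib

/-!
(⇒) If `Y` is order closed, the measurable sets whose indicators lie in `Y` form a σ-algebra:
countable unions are increasing limits of finite ones. It contains every `{g > r}` with `g ∈ Y`,
whose indicator is the increasing limit of `(n (g - r) ∧ 1) ∨ 0`, hence contains `σ(Y)`. So
`σ(Y)`-simple functions lie in `Y`, and an element of `X` with a `σ(Y)`-measurable representative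
is a dominated a.e. limit of them. In the ideal `X`, a dominated a.e. convergent sequence
order-converges, the tail suprema of `|yₙ - x|` being the dominating net.

(⇐) An order-null net `z` in `X` has a subsequence tending to `0` a.e.: pick indices along which
`∫ arctan z` decreases to its infimum; the a.e. limit `w` of that subsequence lies below every `z a`,
since otherwise `min w (z a)` would have a strictly smaller integral. Thus `w ≤ 0`. An order
limit of elements of `Y` is therefore an a.e. limit of `σ(Y)`-measurable functions.
-/

open MeasureTheory Filter

universe u

variable {Ω : Type u}

/-- An ideal (solid subspace) of `L⁰`. -/
def IsIdealL0 {m0 : MeasurableSpace Ω} {μ : Measure Ω} (X : Submodule ℝ (Ω →ₘ[μ] ℝ)) : Prop :=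
  ∀ x y : Ω →ₘ[μ] ℝ, |x| ≤ |y| → y ∈ X → x ∈ X

/-- Order convergence of a net `y` to `x` within the subspace `X` of `L⁰`: there is a net
`z` in `X`, antitone, with infimum `0` relative to `X`, eventually dominating `|y a - x|`. -/
def OrderConvNetIn {m0 : MeasurableSpace Ω} {μ : Measure Ω} (X : Submodule ℝ (Ω →ₘ[μ] ℝ))
    {ι : Type*} [Preorder ι] (y : ι → (Ω →ₘ[μ] ℝ)) (x : Ω →ₘ[μ] ℝ) : Prop :=
  ∃ z : ι → (Ω →ₘ[μ] ℝ), (∀ a, z a ∈ X) ∧ Antitone z ∧ (∀ a, 0 ≤ z a) ∧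
    (∀ h ∈ X, (∀ a, h ≤ z a) → h ≤ 0) ∧ ∀ᶠ a in atTop, |y a - x| ≤ z a

/-- A subset `Y` of `X ⊆ L⁰` is order closed in `X` if it contains the limit of any net of
its elements order-converging (within `X`) to an element of `X`. -/
def OrderClosedIn {m0 : MeasurableSpace Ω} {μ : Measure Ω} (X : Submodule ℝ (Ω →ₘ[μ] ℝ))
    (Y : Set (Ω →ₘ[μ] ℝ)) : Prop :=
  ∀ (ι : Type u) (_ : Preorder ι) (_ : IsDirected ι (· ≤ ·)) (_ : Nonempty ι)
    (y : ι → (Ω →ₘ[μ] ℝ)) (x : Ω →ₘ[μ] ℝ),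
    (∀ a, y a ∈ Y) → x ∈ X → OrderConvNetIn X y x → x ∈ Y

open Set Topology
open scoped ENNReal

theorem tendsto_ciSup_nat_add_of_tendsto {e : ℕ → ℝ} (hbdd : BddAbove (range e)) {c : ℝ}
    (he : Tendsto e atTop (𝓝 c)) : Tendsto (fun n => ⨆ k, e (n + k)) atTop (𝓝 c) := by
  have hbdd' (n : ℕ) : BddAbove (range fun k => e (n + k)) :=
    hbdd.mono (range_comp_subset_range _ e)
  refine tendsto_order.2 ⟨fun a ha => ?_, fun a ha => ?_⟩
  · filter_upwards [(tendsto_order.1 he).1 a ha] with n hn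
    exact hn.trans_le (by simpa using le_ciSup (hbdd' n) 0)
  · obtain ⟨b, hcb, hba⟩ := exists_between ha
    obtain ⟨N, hN⟩ := eventually_atTop.1 ((tendsto_order.1 he).2 b hcb)
    filter_upwards [eventually_ge_atTop N] with n hn
    exact (ciSup_le fun k => (hN _ (by omega)).le).trans_lt hba

theorem indicator_one_mem_Icc {α : Type*} (A : Set α) (a : α) :
    A.indicator (1 : α → ℝ) a ∈ Icc (0 : ℝ) 1 := by
  by_cases h : a ∈ A <;> simp [h]

theorem tendsto_clamp_nat_mul_sub (r t : ℝ) :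
    Tendsto (fun n : ℕ => max (min (n * (t - r)) 1) 0) atTop (𝓝 ((Ioi r).indicator 1 t)) := by
  rcases le_or_gt t r with htr | hrt
  · have hle (n : ℕ) : min (n * (t - r)) 1 ≤ 0 :=
      (min_le_left _ _).trans (mul_nonpos_of_nonneg_of_nonpos n.cast_nonneg (by linarith))
    rw [indicator_of_notMem (notMem_Ioi.2 htr)]
    simp [max_eq_right (hle _)]
  · have hge : ∀ᶠ n : ℕ in atTop, 1 ≤ n * (t - r) :=
      (tendsto_natCast_atTop_atTop.atTop_mul_const (sub_pos.2 hrt)).eventually_ge_atTop 1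
    rw [indicator_of_mem (mem_Ioi.2 hrt)]
    refine tendsto_const_nhds.congr' ?_
    filter_upwards [hge] with n hn
    simp [min_eq_right hn]

theorem exists_monotone_seq_ge {ι : Type*} [Preorder ι] [IsDirected ι (· ≤ ·)] (a : ℕ → ι)
    (a₀ : ι) : ∃ b : ℕ → ι, Monotone b ∧ a₀ ≤ b 0 ∧ ∀ n, a n ≤ b n := by
  choose c hc using fun i j : ι => directed_of (· ≤ ·) i j
  let b : ℕ → ι := fun n => Nat.rec (c a₀ (a 0)) (fun n bn => c bn (a (n + 1))) n
  refine ⟨b, monotone_nat_of_le_succ fun n => (hc _ _).1, (hc _ _).1, fun n => ?_⟩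
  cases n <;> exact (hc _ _).2

theorem Antitone.exists_monotone_seq_tendsto_iInf {ι α : Type*} [Preorder ι]
    [IsDirected ι (· ≤ ·)] [CompleteLinearOrder α] [TopologicalSpace α] [OrderTopology α]
    [FirstCountableTopology α] {I : ι → α} (hI : Antitone I) (a₀ : ι) :
    ∃ b : ℕ → ι, Monotone b ∧ (∀ n, a₀ ≤ b n) ∧ Tendsto (I ∘ b) atTop (𝓝 (⨅ a, I a)) := by
  obtain ⟨u, -, hu, hu_mem⟩ :=
    exists_seq_tendsto_sInf (range_nonempty_iff_nonempty.2 ⟨a₀⟩) (OrderBot.bddBelow (range I))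
  choose a ha using hu_mem
  obtain ⟨b, hb, hb₀, hab⟩ := exists_monotone_seq_ge a a₀
  refine ⟨b, hb, fun n => hb₀.trans (hb n.zero_le), ?_⟩
  rw [← sInf_range]
  exact tendsto_of_tendsto_of_tendsto_of_le_of_le tendsto_const_nhds hu
    (fun n => sInf_le (mem_range_self _)) (fun n => (ha n) ▸ hI (hab n))

section Lattice

variable {m0 : MeasurableSpace Ω} {μ : Measure Ω} {X Y : Submodule ℝ (Ω →ₘ[μ] ℝ)}

theorem AEEqFun.coeFn_nonneg {f : Ω →ₘ[μ] ℝ} : 0 ≤ᵐ[μ] ⇑f ↔ 0 ≤ f := by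
  rw [← AEEqFun.coeFn_le]
  exact ⟨AEEqFun.coeFn_zero.trans_le, AEEqFun.coeFn_zero.symm.trans_le⟩

theorem IsIdealL0.mem_of_ae_abs_le (hX : IsIdealL0 X) {f g : Ω →ₘ[μ] ℝ} (hg : g ∈ X)
    (hfg : ∀ᵐ ω ∂μ, |f ω| ≤ |g ω|) : f ∈ X := by
  refine hX f g ?_ hg
  rw [← AEEqFun.coeFn_le]
  filter_upwards [AEEqFun.coeFn_abs f, AEEqFun.coeFn_abs g, hfg] with ω h₁ h₂ h
  rwa [h₁, h₂]

theorem sup_mem_of_abs_mem (hY : ∀ y ∈ Y, |y| ∈ Y) {f g : Ω →ₘ[μ] ℝ} (hf : f ∈ Y)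
    (hg : g ∈ Y) : f ⊔ g ∈ Y := by
  have hsup : f ⊔ g = (2⁻¹ : ℝ) • (f + g + |g - f|) := by
    refine AEEqFun.ext ?_
    filter_upwards [AEEqFun.coeFn_sup f g, AEEqFun.coeFn_smul (2⁻¹ : ℝ) (f + g + |g - f|),
      AEEqFun.coeFn_add (f + g) |g - f|, AEEqFun.coeFn_add f g, AEEqFun.coeFn_abs (g - f),
      AEEqFun.coeFn_sub g f] with ω h₁ h₂ h₃ h₄ h₅ h₆
    simp only [h₁, h₂, Pi.smul_apply, h₃, Pi.add_apply, h₄, h₅, h₆, Pi.sub_apply, smul_eq_mul]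
    simpa using sup_eq_half_smul_add_add_abs_sub' ℝ (f ω) (g ω)
  rw [hsup]
  exact Y.smul_mem _ (Y.add_mem (Y.add_mem hf hg) (hY _ (Y.sub_mem hg hf)))

theorem inf_mem_of_abs_mem (hY : ∀ y ∈ Y, |y| ∈ Y) {f g : Ω →ₘ[μ] ℝ} (hf : f ∈ Y)
    (hg : g ∈ Y) : f ⊓ g ∈ Y := by
  have hinf : f ⊓ g = -(-f ⊔ -g) := by
    refine AEEqFun.ext ?_
    filter_upwards [AEEqFun.coeFn_inf f g, AEEqFun.coeFn_neg (-f ⊔ -g),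
      AEEqFun.coeFn_sup (-f) (-g), AEEqFun.coeFn_neg f, AEEqFun.coeFn_neg g]
      with ω h₁ h₂ h₃ h₄ h₅
    simp only [h₁, h₂, Pi.neg_apply, h₃, h₄, h₅, neg_sup, neg_neg]
  rw [hinf]
  exact Y.neg_mem (sup_mem_of_abs_mem hY (Y.neg_mem hf) (Y.neg_mem hg))

end Lattice

section OrderClosed

variable {m0 : MeasurableSpace Ω} {μ : Measure Ω} {X Y : Submodule ℝ (Ω →ₘ[μ] ℝ)}

theorem OrderClosedIn.mem_of_abs_sub_le_antitone
    (hOC : OrderClosedIn X (Y : Set (Ω →ₘ[μ] ℝ))) {y z : ℕ → Ω →ₘ[μ] ℝ} {x : Ω →ₘ[μ] ℝ}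
    (hy : ∀ n, y n ∈ Y) (hx : x ∈ X) (hzX : ∀ n, z n ∈ X) (hz : Antitone z)
    (hz0 : ∀ n, 0 ≤ z n) (hz_lim : ∀ᵐ ω ∂μ, Tendsto (fun n => z n ω) atTop (𝓝 0))
    (hyz : ∀ n, |y n - x| ≤ z n) : x ∈ Y := by
  refine hOC (ULift ℕ) inferInstance inferInstance inferInstance (fun a => y a.down) x
    (fun a => hy a.down) hx ⟨fun a => z a.down, fun a => hzX _, fun a b hab => hz hab,
      fun a => hz0 _, fun h _ hhz => ?_, Eventually.of_forall fun a => hyz a.down⟩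
  rw [← AEEqFun.coeFn_le]
  filter_upwards [ae_all_iff.2 fun n => AEEqFun.coeFn_le.2 (hhz ⟨n⟩), hz_lim,
    AEEqFun.coeFn_zero (α := Ω) (μ := μ) (β := ℝ)] with ω hhzω hlim h0
  rw [h0]
  exact le_of_tendsto_of_tendsto' tendsto_const_nhds hlim hhzω

theorem exists_antitone_abs_sub_le_of_ae_tendsto {y : ℕ → Ω →ₘ[μ] ℝ} {x g : Ω →ₘ[μ] ℝ}
    (hyg : ∀ n, ∀ᵐ ω ∂μ, |y n ω - x ω| ≤ |g ω|)
    (hyx : ∀ᵐ ω ∂μ, Tendsto (fun n => y n ω) atTop (𝓝 (x ω))) :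
    ∃ z : ℕ → Ω →ₘ[μ] ℝ, (∀ n, ∀ᵐ ω ∂μ, |z n ω| ≤ |g ω|) ∧ Antitone z ∧ (∀ n, 0 ≤ z n) ∧
      (∀ᵐ ω ∂μ, Tendsto (fun n => z n ω) atTop (𝓝 0)) ∧ ∀ n, |y n - x| ≤ z n := by
  set e : ℕ → Ω → ℝ := fun n ω => |y n ω - x ω|
  have he : ∀ᵐ ω ∂μ, (∀ n, e n ω ≤ |g ω|) ∧ Tendsto (fun n => e n ω) atTop (𝓝 0) := by
    filter_upwards [ae_all_iff.2 hyg, hyx] with ω hω hlim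
    exact ⟨hω, by simpa [e, ← Real.dist_eq] using tendsto_iff_dist_tendsto_zero.1 hlim⟩
  have hbdd {ω : Ω} (hω : ∀ n, e n ω ≤ |g ω|) (n : ℕ) : BddAbove (range fun k => e (n + k) ω) :=
    ⟨|g ω|, forall_mem_range.2 fun k => hω (n + k)⟩
  set z : ℕ → Ω →ₘ[μ] ℝ := fun n => AEEqFun.mk (fun ω => ⨆ k, e (n + k) ω)
    (Measurable.iSup fun k => ((y (n + k)).measurable.sub x.measurable).abs).aestronglyMeasurable
  have hz : ∀ᵐ ω ∂μ, ∀ n, z n ω = ⨆ k, e (n + k) ω := ae_all_iff.2 fun n => AEEqFun.coeFn_mk _ _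
  have he_le_z : ∀ᵐ ω ∂μ, ∀ n, e n ω ≤ z n ω := by
    filter_upwards [he, hz] with ω ⟨hω, _⟩ hz n
    simpa [hz] using le_ciSup (hbdd hω n) 0
  refine ⟨z, fun n => ?_, antitone_nat_of_succ_le fun n => ?_,
    fun n => AEEqFun.coeFn_nonneg.1 ?_, ?_, fun n => ?_⟩
  · filter_upwards [he, he_le_z, hz] with ω ⟨hω, _⟩ hez hz
    rw [abs_of_nonneg ((abs_nonneg _).trans (hez n)), hz]
    exact ciSup_le fun k => hω (n + k)
  · rw [← AEEqFun.coeFn_le]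
    filter_upwards [he, hz] with ω ⟨hω, _⟩ hz
    rw [hz, hz]
    exact ciSup_le fun k => by rw [add_right_comm]; exact le_ciSup (hbdd hω n) (k + 1)
  · filter_upwards [he_le_z] with ω hez using (abs_nonneg _).trans (hez n)
  · filter_upwards [he, hz] with ω ⟨hω, hlim⟩ hz
    simpa [hz] using tendsto_ciSup_nat_add_of_tendsto ⟨|g ω|, forall_mem_range.2 hω⟩ hlim
  · rw [← AEEqFun.coeFn_le]
    filter_upwards [he_le_z, AEEqFun.coeFn_abs (y n - x), AEEqFun.coeFn_sub (y n) x]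
      with ω hez h₁ h₂
    rw [h₁, h₂]
    exact hez n

theorem OrderClosedIn.mem_of_ae_tendsto_of_dominated
    (hOC : OrderClosedIn X (Y : Set (Ω →ₘ[μ] ℝ))) (hX : IsIdealL0 X)
    (hYX : (Y : Set (Ω →ₘ[μ] ℝ)) ⊆ X) {y : ℕ → Ω →ₘ[μ] ℝ} {x g : Ω →ₘ[μ] ℝ}
    (hy : ∀ n, y n ∈ Y) (hg : g ∈ X) (hyg : ∀ n, ∀ᵐ ω ∂μ, |y n ω - x ω| ≤ |g ω|)
    (hyx : ∀ᵐ ω ∂μ, Tendsto (fun n => y n ω) atTop (𝓝 (x ω))) : x ∈ Y := by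
  obtain ⟨z, hzg, hz, hz0, hz_lim, hyz⟩ := exists_antitone_abs_sub_le_of_ae_tendsto hyg hyx
  have hyx_X : y 0 - x ∈ X := hX.mem_of_ae_abs_le hg <| by
    filter_upwards [hyg 0, AEEqFun.coeFn_sub (y 0) x] with ω h₁ h₂
    rwa [h₂]
  have hx : x ∈ X := by simpa using X.sub_mem (hYX (hy 0)) hyx_X
  exact hOC.mem_of_abs_sub_le_antitone hy hx (fun n => hX.mem_of_ae_abs_le hg (hzg n)) hz hz0
    hz_lim hyz

end OrderClosed

section IndicatorSets

variable {m0 : MeasurableSpace Ω} {μ : Measure Ω} {X Y : Submodule ℝ (Ω →ₘ[μ] ℝ)}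

def IndicatorMem (Y : Submodule ℝ (Ω →ₘ[μ] ℝ)) (A : Set Ω) : Prop :=
  MeasurableSet A ∧ ∃ f ∈ Y, ⇑f =ᵐ[μ] A.indicator 1

theorem indicatorMem_empty : IndicatorMem Y ∅ :=
  ⟨.empty, 0, Y.zero_mem, AEEqFun.coeFn_zero.trans (by rw [indicator_empty]; rfl)⟩

theorem IndicatorMem.compl (h1 : (1 : Ω →ₘ[μ] ℝ) ∈ Y) {A : Set Ω} (hA : IndicatorMem Y A) :
    IndicatorMem Y Aᶜ := by
  obtain ⟨hA, f, hfY, hf⟩ := hA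
  refine ⟨hA.compl, 1 - f, Y.sub_mem h1 hfY, ?_⟩
  filter_upwards [AEEqFun.coeFn_sub 1 f, AEEqFun.coeFn_one (α := Ω) (μ := μ) (β := ℝ), hf]
    with ω h₁ h₂ h₃
  simp [h₁, h₂, h₃, indicator_compl]

theorem IndicatorMem.union (hY : ∀ y ∈ Y, |y| ∈ Y) {A B : Set Ω} (hA : IndicatorMem Y A)
    (hB : IndicatorMem Y B) : IndicatorMem Y (A ∪ B) := by
  obtain ⟨hA, f, hfY, hf⟩ := hA
  obtain ⟨hB, g, hgY, hg⟩ := hB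
  refine ⟨hA.union hB, f ⊔ g, sup_mem_of_abs_mem hY hfY hgY, ?_⟩
  filter_upwards [AEEqFun.coeFn_sup f g, hf, hg] with ω h₁ h₂ h₃
  rw [h₁, h₂, h₃]
  by_cases hωA : ω ∈ A <;> by_cases hωB : ω ∈ B <;> simp [hωA, hωB]

theorem IndicatorMem.accumulate (hY : ∀ y ∈ Y, |y| ∈ Y) {A : ℕ → Set Ω}
    (hA : ∀ n, IndicatorMem Y (A n)) (n : ℕ) : IndicatorMem Y (accumulate A n) := by
  induction n with
  | zero => simpa using hA 0
  | succ n ih => simpa [accumulate_succ] using ih.union hY (hA (n + 1))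

theorem OrderClosedIn.indicatorMem_of_ae_tendsto
    (hOC : OrderClosedIn X (Y : Set (Ω →ₘ[μ] ℝ))) (hX : IsIdealL0 X)
    (hYX : (Y : Set (Ω →ₘ[μ] ℝ)) ⊆ X) (h1 : (1 : Ω →ₘ[μ] ℝ) ∈ Y) {A : Set Ω}
    (hA : MeasurableSet A) {y : ℕ → Ω →ₘ[μ] ℝ} (hy : ∀ n, y n ∈ Y)
    (hy01 : ∀ n, ∀ᵐ ω ∂μ, y n ω ∈ Icc (0 : ℝ) 1)
    (hyA : ∀ᵐ ω ∂μ, Tendsto (fun n => y n ω) atTop (𝓝 (A.indicator 1 ω))) :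
    IndicatorMem Y A := by
  set x : Ω →ₘ[μ] ℝ := AEEqFun.mk _ (measurable_one.indicator hA).aestronglyMeasurable
  have hx : x =ᵐ[μ] A.indicator 1 := AEEqFun.coeFn_mk _ _
  refine ⟨hA, x, hOC.mem_of_ae_tendsto_of_dominated hX hYX hy (hYX h1) (fun n => ?_) ?_, hx⟩
  · filter_upwards [hy01 n, hx, AEEqFun.coeFn_one (α := Ω) (μ := μ) (β := ℝ)]
      with ω ⟨ha₀, ha₁⟩ h₁ h₂
    have ⟨hb₀, hb₁⟩ := indicator_one_mem_Icc A ω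
    simpa [h₁, h₂] using abs_sub_le_of_nonneg_of_le ha₀ ha₁ hb₀ hb₁
  · filter_upwards [hyA, hx] with ω h₁ h₂
    rwa [h₂]

theorem OrderClosedIn.indicatorMem_iUnion (hOC : OrderClosedIn X (Y : Set (Ω →ₘ[μ] ℝ)))
    (hX : IsIdealL0 X) (hYX : (Y : Set (Ω →ₘ[μ] ℝ)) ⊆ X) (hY : ∀ y ∈ Y, |y| ∈ Y)
    (h1 : (1 : Ω →ₘ[μ] ℝ) ∈ Y) {A : ℕ → Set Ω} (hA : ∀ n, IndicatorMem Y (A n)) :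
    IndicatorMem Y (⋃ n, A n) := by
  choose f hfY hf using fun n => (IndicatorMem.accumulate hY hA n).2
  refine hOC.indicatorMem_of_ae_tendsto hX hYX h1 (.iUnion fun n => (hA n).1) hfY
    (fun n => ?_) ?_
  · filter_upwards [hf n] with ω h
    exact h ▸ indicator_one_mem_Icc _ ω
  · filter_upwards [ae_all_iff.2 hf] with ω h
    simp only [h, ← iUnion_accumulate (s := A)]
    exact (monotone_accumulate.tendsto_indicator _ 1 ω).mono_right (pure_le_nhds _)

theorem OrderClosedIn.indicatorMem_preimage_Ioi (hOC : OrderClosedIn X (Y : Set (Ω →ₘ[μ] ℝ)))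
    (hX : IsIdealL0 X) (hYX : (Y : Set (Ω →ₘ[μ] ℝ)) ⊆ X) (hY : ∀ y ∈ Y, |y| ∈ Y)
    (h1 : (1 : Ω →ₘ[μ] ℝ) ∈ Y) {g : Ω →ₘ[μ] ℝ} (hg : g ∈ Y) (r : ℝ) :
    IndicatorMem Y (g ⁻¹' Ioi r) := by
  set u : ℕ → Ω →ₘ[μ] ℝ := fun n => ((n : ℝ) • (g - r • 1)) ⊓ 1 ⊔ 0
  have huY (n : ℕ) : u n ∈ Y :=
    sup_mem_of_abs_mem hY (inf_mem_of_abs_mem hY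
      (Y.smul_mem _ (Y.sub_mem hg (Y.smul_mem _ h1))) h1) Y.zero_mem
  have hu (n : ℕ) : ∀ᵐ ω ∂μ, u n ω = max (min (n * (g ω - r)) 1) 0 := by
    filter_upwards [AEEqFun.coeFn_sup ((n : ℝ) • (g - r • 1) ⊓ 1) 0,
      AEEqFun.coeFn_inf ((n : ℝ) • (g - r • 1)) 1, AEEqFun.coeFn_smul (n : ℝ) (g - r • 1),
      AEEqFun.coeFn_sub g (r • 1), AEEqFun.coeFn_smul r (1 : Ω →ₘ[μ] ℝ),
      AEEqFun.coeFn_one (α := Ω) (μ := μ) (β := ℝ),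
      AEEqFun.coeFn_zero (α := Ω) (μ := μ) (β := ℝ)] with ω h₁ h₂ h₃ h₄ h₅ h₆ h₇
    simp [u, h₁, h₂, h₃, h₄, h₅, h₆, h₇]
  refine hOC.indicatorMem_of_ae_tendsto hX hYX h1 (g.measurable measurableSet_Ioi) huY
    (fun n => ?_) ?_
  · filter_upwards [hu n] with ω h
    rw [h]
    exact ⟨le_max_right _ _, max_le (min_le_right _ _) zero_le_one⟩
  · filter_upwards [ae_all_iff.2 hu] with ω h
    simp only [h]
    exact tendsto_clamp_nat_mul_sub r (g ω)

/-- `σ(Y)`. The null sets of the paper's `σ(Y)` are accounted for by the a.e. equalities. -/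
noncomputable abbrev measurableSpaceOf (Y : Set (Ω →ₘ[μ] ℝ)) : MeasurableSpace Ω :=
  ⨆ g ∈ Y, MeasurableSpace.comap (⇑g) inferInstance

theorem measurable_measurableSpaceOf {Y : Set (Ω →ₘ[μ] ℝ)} {g : Ω →ₘ[μ] ℝ} (hg : g ∈ Y) :
    Measurable[measurableSpaceOf Y] g :=
  Measurable.of_comap_le
    (le_iSup₂ (f := fun g (_ : g ∈ Y) => MeasurableSpace.comap (⇑g) inferInstance) g hg)

theorem OrderClosedIn.indicatorMem_of_measurableSet
    (hOC : OrderClosedIn X (Y : Set (Ω →ₘ[μ] ℝ))) (hX : IsIdealL0 X)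
    (hYX : (Y : Set (Ω →ₘ[μ] ℝ)) ⊆ X) (hY : ∀ y ∈ Y, |y| ∈ Y) (h1 : (1 : Ω →ₘ[μ] ℝ) ∈ Y)
    {A : Set Ω} (hA : MeasurableSet[measurableSpaceOf (Y : Set (Ω →ₘ[μ] ℝ))] A) :
    IndicatorMem Y A := by
  have hle : measurableSpaceOf (Y : Set (Ω →ₘ[μ] ℝ)) ≤
      MeasurableSpace.generateFrom {A | IndicatorMem Y A} :=
    iSup₂_le fun g hg => Measurable.comap_le <| measurable_of_Ioi fun r =>
      MeasurableSpace.measurableSet_generateFrom (hOC.indicatorMem_preimage_Ioi hX hYX hY h1 hg r)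
  exact MeasurableSpace.generateFrom_induction _ (fun A _ => IndicatorMem Y A) (fun _ ht _ => ht)
    indicatorMem_empty (fun _ _ ht => ht.compl h1)
    (fun _ _ hs => hOC.indicatorMem_iUnion hX hYX hY h1 hs) A (hle A hA)

end IndicatorSets

section SimpleApproximation

-- `m` is declared first so that instance resolution picks the ambient `m0` for `Ω →ₘ[μ] ℝ`.
variable {m m0 : MeasurableSpace Ω} {μ : Measure Ω} {X Y : Submodule ℝ (Ω →ₘ[μ] ℝ)}

theorem exists_mem_ae_eq_simpleFunc (hm : ∀ A, MeasurableSet[m] A → IndicatorMem Y A)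
    (s : @SimpleFunc Ω m ℝ) : ∃ f ∈ Y, ⇑f =ᵐ[μ] s := by
  induction s using @SimpleFunc.induction Ω ℝ m with
  | @const c A hA =>
    obtain ⟨-, f, hfY, hf⟩ := hm _ hA
    refine ⟨c • f, Y.smul_mem c hfY, ?_⟩
    filter_upwards [AEEqFun.coeFn_smul c f, hf] with ω h₁ h₂
    by_cases hω : ω ∈ A <;> simp [h₁, h₂, hω]
  | add _ hf hg =>
    obtain ⟨f, hfY, hf⟩ := hf
    obtain ⟨g, hgY, hg⟩ := hg
    exact ⟨f + g, Y.add_mem hfY hgY, (AEEqFun.coeFn_add f g).trans (hf.add hg)⟩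

theorem OrderClosedIn.mem_of_ae_eq_measurable (hOC : OrderClosedIn X (Y : Set (Ω →ₘ[μ] ℝ)))
    (hX : IsIdealL0 X) (hYX : (Y : Set (Ω →ₘ[μ] ℝ)) ⊆ X)
    (hm : ∀ A, MeasurableSet[m] A → IndicatorMem Y A) {h : Ω →ₘ[μ] ℝ} (hhX : h ∈ X)
    {h' : Ω → ℝ} (hh' : Measurable[m] h') (hhh' : ⇑h =ᵐ[μ] h') : h ∈ Y := by
  set s : ℕ → @SimpleFunc Ω m ℝ := @SimpleFunc.approxOn ℝ Ω _ _ _ m h' hh' univ 0 (mem_univ 0) _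
  choose f hfY hf using fun n => exists_mem_ae_eq_simpleFunc (μ := μ) hm (s n)
  refine hOC.mem_of_ae_tendsto_of_dominated hX hYX hfY (X.smul_mem (3 : ℝ) hhX) (fun n => ?_) ?_
  · filter_upwards [hf n, hhh', AEEqFun.coeFn_smul (3 : ℝ) h] with ω h₁ h₂ h₃
    have hs : |s n ω| ≤ |h' ω| + |h' ω| :=
      @SimpleFunc.norm_approxOn_zero_le Ω ℝ m _ _ _ h' hh' univ (mem_univ 0) _ ω n
    rw [h₁, h₂, h₃, Pi.smul_apply, h₂, smul_eq_mul, abs_mul]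
    calc |s n ω - h' ω| ≤ |s n ω| + |h' ω| := abs_sub _ _
      _ ≤ |3| * |h' ω| := by norm_num; linarith
  · filter_upwards [ae_all_iff.2 hf, hhh'] with ω h₁ h₂
    simpa [h₁, h₂] using
      @SimpleFunc.tendsto_approxOn ℝ Ω _ _ _ m h' hh' univ 0 (mem_univ 0) _ ω (by simp)

end SimpleApproximation

section ArctanIntegral

variable {m0 : MeasurableSpace Ω} {μ : Measure Ω}

noncomputable def arctanIntegral (μ : Measure Ω) (f : Ω → ℝ) : ℝ≥0∞ :=
  ∫⁻ ω, ENNReal.ofReal (Real.arctan (f ω)) ∂μ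

theorem ofReal_arctan_le (t : ℝ) :
    ENNReal.ofReal (Real.arctan t) ≤ ENNReal.ofReal (Real.pi / 2) :=
  ENNReal.ofReal_le_ofReal (Real.arctan_lt_pi_div_two t).le

theorem arctanIntegral_mono_ae {f g : Ω → ℝ} (hfg : f ≤ᵐ[μ] g) :
    arctanIntegral μ f ≤ arctanIntegral μ g :=
  lintegral_mono_ae <| hfg.mono fun _ h =>
    ENNReal.ofReal_le_ofReal (Real.arctan_strictMono.monotone h)

theorem arctanIntegral_ne_top [IsFiniteMeasure μ] (f : Ω → ℝ) : arctanIntegral μ f ≠ ∞ :=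
  ((lintegral_mono fun ω => ofReal_arctan_le (f ω)).trans_lt
    (lintegral_const_lt_top ENNReal.ofReal_ne_top)).ne

theorem tendsto_arctanIntegral [IsFiniteMeasure μ] {f : ℕ → Ω → ℝ} {g : Ω → ℝ}
    (hf : ∀ n, Measurable (f n)) (hfg : ∀ᵐ ω ∂μ, Tendsto (fun n => f n ω) atTop (𝓝 (g ω))) :
    Tendsto (fun n => arctanIntegral μ (f n)) atTop (𝓝 (arctanIntegral μ g)) :=
  tendsto_lintegral_of_dominated_convergence (fun _ => ENNReal.ofReal (Real.pi / 2))
    (fun n => ENNReal.measurable_ofReal.comp (Real.continuous_arctan.measurable.comp (hf n)))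
    (fun _ => ae_of_all _ fun _ => ofReal_arctan_le _)
    (lintegral_const_lt_top ENNReal.ofReal_ne_top).ne
    (hfg.mono fun _ h => ((ENNReal.continuous_ofReal.comp Real.continuous_arctan).tendsto _).comp h)

theorem ae_le_of_arctanIntegral_le [IsFiniteMeasure μ] {f g : Ω → ℝ} (hg : Measurable g)
    (hf : 0 ≤ᵐ[μ] f) (hfg : f ≤ᵐ[μ] g) (hgf : arctanIntegral μ g ≤ arctanIntegral μ f) :
    g ≤ᵐ[μ] f := by
  have hmeas : Measurable fun ω => ENNReal.ofReal (Real.arctan (g ω)) :=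
    ENNReal.measurable_ofReal.comp (Real.continuous_arctan.measurable.comp hg)
  filter_upwards [ae_eq_of_ae_le_of_lintegral_le (hfg.mono fun _ h => ENNReal.ofReal_le_ofReal
    (Real.arctan_strictMono.monotone h)) (arctanIntegral_ne_top f) hmeas.aemeasurable hgf, hf, hfg]
    with ω h h₀ hle
  have h₀' : 0 ≤ Real.arctan (f ω) := Real.arctan_nonneg.2 h₀
  exact (Real.arctan_injective ((ENNReal.ofReal_eq_ofReal_iff h₀'
    (h₀'.trans (Real.arctan_strictMono.monotone hle))).1 h)).symm.le

end ArctanIntegral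

section OrderConvergence

variable {m0 : MeasurableSpace Ω} {μ : Measure Ω} {X : Submodule ℝ (Ω →ₘ[μ] ℝ)}

theorem ae_le_of_arctanIntegral_le_iInf [IsFiniteMeasure μ] {ι : Type*} [Preorder ι]
    [IsDirected ι (· ≤ ·)] {z : ι → Ω →ₘ[μ] ℝ} (hz : Antitone z) (hz0 : ∀ a, 0 ≤ z a)
    {b : ℕ → ι} {w : Ω → ℝ} (hw : Measurable w) (hw0 : 0 ≤ᵐ[μ] w)
    (hbw : ∀ᵐ ω ∂μ, Tendsto (fun n => z (b n) ω) atTop (𝓝 (w ω)))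
    (hIw : arctanIntegral μ w ≤ ⨅ a, arctanIntegral μ (z a)) (a : ι) : w ≤ᵐ[μ] z a := by
  choose d hd using fun n => directed_of (· ≤ ·) (b n) a
  set v : Ω → ℝ := fun ω => min (w ω) (z a ω)
  have hv : arctanIntegral μ w ≤ arctanIntegral μ v := by
    refine hIw.trans (ge_of_tendsto (tendsto_arctanIntegral
      (fun n => (z (b n)).measurable.min (z a).measurable)
      (hbw.mono fun _ h => h.min tendsto_const_nhds)) (Eventually.of_forall fun n => ?_))
    refine (iInf_le _ (d n)).trans (arctanIntegral_mono_ae ?_)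
    filter_upwards [AEEqFun.coeFn_le.2 (hz (hd n).1), AEEqFun.coeFn_le.2 (hz (hd n).2)]
      with ω h₁ h₂ using le_min h₁ h₂
  have hv0 : 0 ≤ᵐ[μ] v := by
    filter_upwards [hw0, AEEqFun.coeFn_nonneg.2 (hz0 a)] with ω h₁ h₂ using le_min h₁ h₂
  filter_upwards [ae_le_of_arctanIntegral_le hw hv0
    (Eventually.of_forall fun _ => min_le_left _ _) hv] with ω h
  exact h.trans (min_le_right _ _)

theorem exists_seq_ae_tendsto_zero [IsFiniteMeasure μ] (hX : IsIdealL0 X) {ι : Type*}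
    [Preorder ι] [IsDirected ι (· ≤ ·)] {z : ι → Ω →ₘ[μ] ℝ} (hzX : ∀ a, z a ∈ X)
    (hz : Antitone z) (hz0 : ∀ a, 0 ≤ z a) (hinf : ∀ h ∈ X, (∀ a, h ≤ z a) → h ≤ 0) (a₀ : ι) :
    ∃ b : ℕ → ι, (∀ n, a₀ ≤ b n) ∧ ∀ᵐ ω ∂μ, Tendsto (fun n => z (b n) ω) atTop (𝓝 0) := by
  have hI : Antitone fun a => arctanIntegral μ (z a) :=
    fun a a' h => arctanIntegral_mono_ae (AEEqFun.coeFn_le.2 (hz h))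
  obtain ⟨b, hb, hab, hIb⟩ := hI.exists_monotone_seq_tendsto_iInf a₀
  set w : Ω → ℝ := fun ω => ⨅ n, z (b n) ω
  have hw_meas : Measurable w := Measurable.iInf fun n => (z (b n)).measurable
  have hw : ∀ᵐ ω ∂μ, Tendsto (fun n => z (b n) ω) atTop (𝓝 (w ω)) ∧ 0 ≤ w ω ∧
      ∀ n, w ω ≤ z (b n) ω := by
    filter_upwards [ae_all_iff.2 fun n => AEEqFun.coeFn_nonneg.2 (hz0 (b n)),
      ae_all_iff.2 fun n : ℕ => AEEqFun.coeFn_le.2 (hz (hb n.le_succ))] with ω h₀ hanti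
    have hbdd : BddBelow (range fun n => z (b n) ω) := ⟨0, forall_mem_range.2 h₀⟩
    exact ⟨tendsto_atTop_ciInf (antitone_nat_of_succ_le hanti) hbdd, le_ciInf h₀,
      fun n => ciInf_le hbdd n⟩
  have hIw : arctanIntegral μ w ≤ ⨅ a, arctanIntegral μ (z a) :=
    (tendsto_nhds_unique (tendsto_arctanIntegral (fun n => (z (b n)).measurable)
      (hw.mono fun _ h => h.1)) hIb).le
  have hw_le := ae_le_of_arctanIntegral_le_iInf hz hz0 hw_meas (hw.mono fun _ h => h.2.1)
    (hw.mono fun _ h => h.1) hIw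
  set W : Ω →ₘ[μ] ℝ := AEEqFun.mk w hw_meas.aestronglyMeasurable
  have hW : ⇑W =ᵐ[μ] w := AEEqFun.coeFn_mk _ _
  have hWX : W ∈ X := hX.mem_of_ae_abs_le (hzX (b 0)) <| by
    filter_upwards [hW, hw] with ω h ⟨_, hw0, hwz⟩
    rw [h, abs_of_nonneg hw0, abs_of_nonneg (hw0.trans (hwz 0))]
    exact hwz 0
  have hW0 : W ≤ 0 := hinf W hWX fun a => AEEqFun.coeFn_le.1 (hW.trans_le (hw_le a))
  refine ⟨b, hab, ?_⟩
  filter_upwards [hw, hW, AEEqFun.coeFn_le.2 hW0,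
    AEEqFun.coeFn_zero (α := Ω) (μ := μ) (β := ℝ)] with ω h h₁ h₂ hzero
  rw [hzero, h₁] at h₂
  simpa [le_antisymm h₂ h.2.1] using h.1

theorem OrderConvNetIn.exists_seq_ae_tendsto [IsFiniteMeasure μ] (hX : IsIdealL0 X) {ι : Type*}
    [Preorder ι] [IsDirected ι (· ≤ ·)] [Nonempty ι] {y : ι → Ω →ₘ[μ] ℝ} {x : Ω →ₘ[μ] ℝ}
    (hyx : OrderConvNetIn X y x) :
    ∃ b : ℕ → ι, ∀ᵐ ω ∂μ, Tendsto (fun n => y (b n) ω) atTop (𝓝 (x ω)) := by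
  obtain ⟨z, hzX, hz, hz0, hinf, hyz⟩ := hyx
  obtain ⟨a₀, ha₀⟩ := eventually_atTop.1 hyz
  obtain ⟨b, hb, hzb⟩ := exists_seq_ae_tendsto_zero hX hzX hz hz0 hinf a₀
  refine ⟨b, ?_⟩
  filter_upwards [hzb, ae_all_iff.2 fun n => AEEqFun.coeFn_le.2 (ha₀ _ (hb n)),
    ae_all_iff.2 fun n => AEEqFun.coeFn_abs (y (b n) - x),
    ae_all_iff.2 fun n => AEEqFun.coeFn_sub (y (b n)) x] with ω hlim hle habs hsub
  rw [tendsto_iff_dist_tendsto_zero]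
  refine squeeze_zero (fun _ => dist_nonneg) (fun n => ?_) hlim
  simpa [Real.dist_eq, habs, hsub] using hle n

end OrderConvergence

theorem exists_measurable_ae_eq_of_ae_tendsto {m m0 : MeasurableSpace Ω} {μ : Measure Ω}
    {g : ℕ → Ω → ℝ} (hg : ∀ n, Measurable[m] (g n)) {x : Ω → ℝ}
    (hx : ∀ᵐ ω ∂μ, Tendsto (fun n => g n ω) atTop (𝓝 (x ω))) :
    ∃ x' : Ω → ℝ, Measurable[m] x' ∧ x =ᵐ[μ] x' :=
  ⟨fun ω => limsup (fun n => g n ω) atTop, Measurable.limsup hg,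
    hx.mono fun _ h => h.limsup_eq.symm⟩

theorem orderClosed_iff_eq_measurable_inter_general
    {m0 : MeasurableSpace Ω} {μ : Measure Ω} [IsProbabilityMeasure μ]
    (X : Submodule ℝ (Ω →ₘ[μ] ℝ)) (hX : IsIdealL0 X)
    (Y : Submodule ℝ (Ω →ₘ[μ] ℝ)) (hYX : (Y : Set (Ω →ₘ[μ] ℝ)) ⊆ X)
    (hsub : ∀ y ∈ Y, |y| ∈ Y) (h1 : (1 : Ω →ₘ[μ] ℝ) ∈ Y) :
    OrderClosedIn X (Y : Set (Ω →ₘ[μ] ℝ)) ↔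
      ∀ h : Ω →ₘ[μ] ℝ, h ∈ Y ↔
        (h ∈ X ∧ ∃ h' : Ω → ℝ,
          Measurable[⨆ g ∈ (Y : Set (Ω →ₘ[μ] ℝ)), MeasurableSpace.comap (⇑g)
            (inferInstance : MeasurableSpace ℝ)] h' ∧ ⇑h =ᵐ[μ] h') := by
  constructor
  · intro hOC h
    refine ⟨fun hh => ⟨hYX hh, h, measurable_measurableSpaceOf hh, .rfl⟩, ?_⟩
    rintro ⟨hhX, h', hh', hhh'⟩
    exact hOC.mem_of_ae_eq_measurable hX hYX
      (fun A hA => hOC.indicatorMem_of_measurableSet hX hYX hsub h1 hA) hhX hh' hhh'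
  · intro hchar ι _ _ _ y x hy hx hyx
    obtain ⟨b, hb⟩ := hyx.exists_seq_ae_tendsto hX
    choose g hg hyg using fun n => ((hchar _).1 (hy (b n))).2
    obtain ⟨x', hx', hxx'⟩ := exists_measurable_ae_eq_of_ae_tendsto hg <| by
      filter_upwards [hb, ae_all_iff.2 hyg] with ω h₁ h₂
      simpa [h₂] using h₁
    exact (hchar x).2 ⟨hx, x', hx', hxx'⟩

/-- Lemma 2.2: For a sublattice `Y` (with `1 ∈ Y`) of an ideal `X` of `L⁰`
containing the constants, `Y` is order closed in `X` iff `Y = L⁰(σ(Y)) ∩ X`, where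
`σ(Y)` is the σ-algebra generated by the members of `Y` (null sets are accounted for by
allowing modification on a null set). -/
theorem orderClosed_iff_eq_measurable_inter
    {m0 : MeasurableSpace Ω} {μ : Measure Ω} [IsProbabilityMeasure μ]
    (X : Submodule ℝ (Ω →ₘ[μ] ℝ)) (hX : IsIdealL0 X)
    (hconst : ∀ c : ℝ, AEEqFun.const Ω (β := ℝ) c ∈ X)
    (Y : Submodule ℝ (Ω →ₘ[μ] ℝ)) (hYX : (Y : Set (Ω →ₘ[μ] ℝ)) ⊆ X)
    (hsub : ∀ y ∈ Y, |y| ∈ Y) (h1 : (1 : Ω →ₘ[μ] ℝ) ∈ Y) :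
    OrderClosedIn X (Y : Set (Ω →ₘ[μ] ℝ)) ↔
      ∀ h : Ω →ₘ[μ] ℝ, h ∈ Y ↔
        (h ∈ X ∧ ∃ h' : Ω → ℝ,
          Measurable[⨆ g ∈ (Y : Set (Ω →ₘ[μ] ℝ)), MeasurableSpace.comap (⇑g)
            (inferInstance : MeasurableSpace ℝ)] h' ∧ ⇑h =ᵐ[μ] h') :=
  orderClosed_iff_eq_measurable_inter_general (m0 := m0) X hX Y hYX hsub h1
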